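/- arXiv:1712.00811 — 5 statements merged into one kernel-verified Lean document; each statement's English description precedes it below -/
import Mathlib

section
/- For all real numbers m, n ≥ 1, (m+n)·ln²(m+n) − m·ln²(m) − n·ln²(n) ≤ 2·(m+n)·ln(m+n). -/
theorem log_sq_superadditive (m n : ℝ) (hm : 1 ≤ m) (hn : 1 ≤ n) :
    (m + n) * (Real.log (m + n)) ^ 2 - m * (Real.log m) ^ 2 - n * (Real.log n) ^ 2
      ≤ 2 * (m + n) * Real.log (m + n) := by
  have hm0 : (0:ℝ) < m := lt_of_lt_of_le one_pos hm
  have hn0 : (0:ℝ) < n := lt_of_lt_of_le one_pos hn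
  set L := Real.log (m + n) with hLdef
  set A := Real.log m with hAdef
  set B := Real.log n with hBdef
  have hA : 0 ≤ A := Real.log_nonneg hm
  have hB : 0 ≤ B := Real.log_nonneg hn
  have hAL : A ≤ L := Real.log_le_log hm0 (by linarith)
  have hBL : B ≤ L := Real.log_le_log hn0 (by linarith)
  have hL : 0 ≤ L := le_trans hA hAL
  have h1 : m * (L - A) ≤ n := by
    have : L - A = Real.log ((m + n) / m) := by
      rw [Real.log_div (by linarith) (ne_of_gt hm0)]
    have h2 : Real.log ((m + n) / m) ≤ (m + n) / m - 1 :=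
      Real.log_le_sub_one_of_pos (by positivity)
    have h3 : L - A ≤ n / m := by
      rw [this]; calc Real.log ((m+n)/m) ≤ (m+n)/m - 1 := h2
        _ = n / m := by field_simp; ring
    calc m * (L - A) ≤ m * (n / m) := by
          exact mul_le_mul_of_nonneg_left h3 hm0.le
      _ = n := by field_simp
  have h2 : n * (L - B) ≤ m := by
    have : L - B = Real.log ((m + n) / n) := by
      rw [Real.log_div (by linarith) (ne_of_gt hn0)]
    have h2' : Real.log ((m + n) / n) ≤ (m + n) / n - 1 :=
      Real.log_le_sub_one_of_pos (by positivity)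
    have h3 : L - B ≤ m / n := by
      rw [this]; calc Real.log ((m+n)/n) ≤ (m+n)/n - 1 := h2'
        _ = m / n := by field_simp; ring
    calc n * (L - B) ≤ n * (m / n) := by
          exact mul_le_mul_of_nonneg_left h3 hn0.le
      _ = m := by field_simp
  nlinarith [mul_le_mul_of_nonneg_right h1 (by linarith : (0:ℝ) ≤ L + A),
    mul_le_mul_of_nonneg_right h2 (by linarith : (0:ℝ) ≤ L + B),
    mul_nonneg (mul_nonneg hn0.le (sub_nonneg.2 hAL)) (sub_nonneg.2 hAL),
    mul_nonneg (mul_nonneg hm0.le (sub_nonneg.2 hBL)) (sub_nonneg.2 hBL)]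
end

section
/- There exists a constant α₁ > 0 such that for all integers m, n ≥ 1, ∑_{i=1}^{m} ∑_{j=1}^{n} α₁·ln(i+j)/(i+j) ≤ m·ln(e·m) + n·ln(e·n). -/
open Real Finset

private lemma aux_sum_inv_sqrt_le (n : ℕ) :
    ∑ j ∈ Finset.Icc 1 n, 1 / Real.sqrt j ≤ 2 * Real.sqrt n := by
  induction n with
  | zero => simp
  | succ n ih =>
    rw [Finset.sum_Icc_succ_top (by omega)]
    push_cast
    have hb : (0:ℝ) < Real.sqrt ((n:ℝ)+1) := Real.sqrt_pos.mpr (by positivity)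
    have hsq : Real.sqrt ((n:ℝ)+1) ^ 2 = (n:ℝ)+1 := Real.sq_sqrt (by positivity)
    have hsqn : Real.sqrt (n:ℝ) ^ 2 = (n:ℝ) := Real.sq_sqrt (by positivity)
    have hprod : Real.sqrt (n:ℝ) * Real.sqrt ((n:ℝ)+1) ≤ (n:ℝ) + 1/2 := by
      rw [← Real.sqrt_mul (by positivity)]
      have h1 : (n:ℝ) * ((n:ℝ)+1) ≤ ((n:ℝ) + 1/2)^2 := by nlinarith
      calc Real.sqrt ((n:ℝ) * ((n:ℝ)+1)) ≤ Real.sqrt (((n:ℝ)+1/2)^2) :=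
            Real.sqrt_le_sqrt h1
        _ = (n:ℝ) + 1/2 := Real.sqrt_sq (by positivity)
    have hstep : 1 / Real.sqrt ((n:ℝ)+1) ≤ 2 * Real.sqrt ((n:ℝ)+1) - 2 * Real.sqrt (n:ℝ) := by
      rw [div_le_iff₀ hb]
      nlinarith
    have := ih
    push_cast at this ⊢
    linarith

private lemma aux_sum_log_le (m : ℕ) (hm : 1 ≤ m) :
    ∑ i ∈ Finset.Icc 1 m, Real.log (2*(i:ℝ)) / (2 * Real.sqrt i) ≤
      Real.log (2*(m:ℝ)) * Real.sqrt m := by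
  have hm1 : (1:ℝ) ≤ (m:ℝ) := by exact_mod_cast hm
  have hlogm : 0 ≤ Real.log (2*(m:ℝ)) := Real.log_nonneg (by linarith)
  calc ∑ i ∈ Finset.Icc 1 m, Real.log (2*(i:ℝ)) / (2 * Real.sqrt i)
      ≤ ∑ i ∈ Finset.Icc 1 m, Real.log (2*(m:ℝ)) / 2 * (1 / Real.sqrt i) := by
        refine Finset.sum_le_sum fun i hi => ?_
        obtain ⟨hi1, him⟩ := Finset.mem_Icc.mp hi
        have hi1' : (1:ℝ) ≤ (i:ℝ) := by exact_mod_cast hi1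
        have him' : (i:ℝ) ≤ (m:ℝ) := by exact_mod_cast him
        have hsi : (0:ℝ) < Real.sqrt i := Real.sqrt_pos.mpr (by linarith)
        have hlog : Real.log (2*(i:ℝ)) ≤ Real.log (2*(m:ℝ)) :=
          Real.log_le_log (by linarith) (by linarith)
        rw [mul_one_div, div_div]
        exact div_le_div_of_nonneg_right hlog (by positivity) |>.trans_eq rfl
    _ = Real.log (2*(m:ℝ)) / 2 * ∑ i ∈ Finset.Icc 1 m, (1 / Real.sqrt i) := by
        rw [Finset.mul_sum]
    _ ≤ Real.log (2*(m:ℝ)) / 2 * (2 * Real.sqrt m) := by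
        exact mul_le_mul_of_nonneg_left (aux_sum_inv_sqrt_le m) (by positivity)
    _ = Real.log (2*(m:ℝ)) * Real.sqrt m := by ring

private lemma aux_pointwise (i j : ℕ) (hi : 1 ≤ i) (hj : 1 ≤ j) :
    Real.log ((i:ℝ)+(j:ℝ)) / ((i:ℝ)+(j:ℝ)) ≤
      Real.log (2*(i:ℝ)) / (2*Real.sqrt i) * (1/Real.sqrt j)
      + 1/Real.sqrt i * (Real.log (2*(j:ℝ)) / (2*Real.sqrt j)) := by
  have hi1 : (1:ℝ) ≤ (i:ℝ) := by exact_mod_cast hi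
  have hj1 : (1:ℝ) ≤ (j:ℝ) := by exact_mod_cast hj
  have hsi : (0:ℝ) < Real.sqrt i := Real.sqrt_pos.mpr (by linarith)
  have hsj : (0:ℝ) < Real.sqrt j := Real.sqrt_pos.mpr (by linarith)
  have hsi2 : Real.sqrt (i:ℝ) ^ 2 = (i:ℝ) := Real.sq_sqrt (by linarith)
  have hsj2 : Real.sqrt (j:ℝ) ^ 2 = (j:ℝ) := Real.sq_sqrt (by linarith)
  have hnum : Real.log ((i:ℝ)+(j:ℝ)) ≤ Real.log (2*(i:ℝ)) + Real.log (2*(j:ℝ)) := by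
    rw [← Real.log_mul (by linarith) (by linarith)]
    exact Real.log_le_log (by linarith) (by nlinarith)
  have hden : 2 * Real.sqrt i * Real.sqrt j ≤ (i:ℝ)+(j:ℝ) := by
    nlinarith [sq_nonneg (Real.sqrt (i:ℝ) - Real.sqrt (j:ℝ))]
  have hnum0 : 0 ≤ Real.log (2*(i:ℝ)) + Real.log (2*(j:ℝ)) := by
    have := Real.log_nonneg (show (1:ℝ) ≤ 2*(i:ℝ) by linarith)
    have := Real.log_nonneg (show (1:ℝ) ≤ 2*(j:ℝ) by linarith)
    linarith
  have h1 : Real.log ((i:ℝ)+(j:ℝ)) / ((i:ℝ)+(j:ℝ)) ≤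
      (Real.log (2*(i:ℝ)) + Real.log (2*(j:ℝ))) / (2 * Real.sqrt i * Real.sqrt j) :=
    div_le_div₀ hnum0 hnum (by positivity) hden
  refine h1.trans_eq ?_
  field_simp

private lemma aux_key (x y : ℝ) (hx : 1 ≤ x) (hy : 1 ≤ y) :
    Real.log (2*x) * Real.sqrt x * (2*Real.sqrt y)
      + 2*Real.sqrt x * (Real.log (2*y) * Real.sqrt y)
      ≤ 2 * (x * (1 + Real.log x) + y * (1 + Real.log y)) := by
  have hsx : (0:ℝ) ≤ Real.sqrt x := Real.sqrt_nonneg _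
  have hsy : (0:ℝ) ≤ Real.sqrt y := Real.sqrt_nonneg _
  have hsx2 : Real.sqrt x ^ 2 = x := Real.sq_sqrt (by linarith)
  have hsy2 : Real.sqrt y ^ 2 = y := Real.sq_sqrt (by linarith)
  have hlx : Real.log (2*x) = Real.log 2 + Real.log x :=
    Real.log_mul (by norm_num) (by linarith)
  have hly : Real.log (2*y) = Real.log 2 + Real.log y :=
    Real.log_mul (by norm_num) (by linarith)
  have ha : 0 ≤ Real.log x := Real.log_nonneg hx
  have hb : 0 ≤ Real.log y := Real.log_nonneg hy
  have hL0 : 0 ≤ Real.log 2 := Real.log_nonneg (by norm_num)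
  have hL1 : Real.log 2 ≤ 1 := by
    have := Real.log_le_sub_one_of_pos (show (0:ℝ) < 2 by norm_num)
    linarith
  have h2st : 2 * Real.sqrt x * Real.sqrt y ≤ x + y := by
    nlinarith [sq_nonneg (Real.sqrt x - Real.sqrt y)]
  have hre : 0 ≤ (x - y) * (Real.log x - Real.log y) := by
    rcases le_total x y with h | h
    · have : Real.log x ≤ Real.log y := Real.log_le_log (by linarith) h
      have h1 : x - y ≤ 0 := by linarith
      have h2 : Real.log x - Real.log y ≤ 0 := by linarith
      nlinarith
    · have : Real.log y ≤ Real.log x := Real.log_le_log (by linarith) h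
      exact mul_nonneg (by linarith) (by linarith)
  rw [hlx, hly]
  nlinarith [mul_le_mul_of_nonneg_right h2st (show (0:ℝ) ≤ Real.log x + Real.log y by linarith),
    mul_le_mul_of_nonneg_right h2st (show (0:ℝ) ≤ 2 * Real.log 2 by linarith),
    mul_le_mul_of_nonneg_left hL1 (show (0:ℝ) ≤ x + y by linarith)]

theorem double_sum_log_div_le :
    ∃ α₁ : ℝ, 0 < α₁ ∧ ∀ m n : ℕ, 1 ≤ m → 1 ≤ n →
      ∑ i ∈ Finset.Icc 1 m, ∑ j ∈ Finset.Icc 1 n,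
          α₁ * Real.log ((i + j : ℕ) : ℝ) / ((i + j : ℕ) : ℝ) ≤
        (m : ℝ) * Real.log (Real.exp 1 * m) + (n : ℝ) * Real.log (Real.exp 1 * n) := by
  refine ⟨1/2, by norm_num, fun m n hm hn => ?_⟩
  have hm1 : (1:ℝ) ≤ (m:ℝ) := by exact_mod_cast hm
  have hn1 : (1:ℝ) ≤ (n:ℝ) := by exact_mod_cast hn
  set f : ℕ → ℝ := fun i => Real.log (2*(i:ℝ)) / (2*Real.sqrt i) with hf
  set g : ℕ → ℝ := fun j => 1 / Real.sqrt j with hg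
  have hfnn : ∀ i ∈ Finset.Icc 1 m, 0 ≤ f i := by
    intro i hi
    obtain ⟨hi1, _⟩ := Finset.mem_Icc.mp hi
    have hi1' : (1:ℝ) ≤ (i:ℝ) := by exact_mod_cast hi1
    have : 0 ≤ Real.log (2*(i:ℝ)) := Real.log_nonneg (by linarith)
    positivity
  have hgnn : ∀ (s : Finset ℕ), 0 ≤ ∑ j ∈ s, g j :=
    fun s => Finset.sum_nonneg fun j _ => by positivity
  have hSf : ∑ i ∈ Finset.Icc 1 m, f i ≤ Real.log (2*(m:ℝ)) * Real.sqrt m :=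
    aux_sum_log_le m hm
  have hSf' : ∑ j ∈ Finset.Icc 1 n, f j ≤ Real.log (2*(n:ℝ)) * Real.sqrt n :=
    aux_sum_log_le n hn
  have hSg : ∑ j ∈ Finset.Icc 1 n, g j ≤ 2 * Real.sqrt n := aux_sum_inv_sqrt_le n
  have hSg' : ∑ i ∈ Finset.Icc 1 m, g i ≤ 2 * Real.sqrt m := aux_sum_inv_sqrt_le m
  have step1 : ∑ i ∈ Finset.Icc 1 m, ∑ j ∈ Finset.Icc 1 n,
      (1/2 : ℝ) * Real.log ((i + j : ℕ) : ℝ) / ((i + j : ℕ) : ℝ) ≤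
      (1/2 : ℝ) * ((∑ i ∈ Finset.Icc 1 m, f i) * (∑ j ∈ Finset.Icc 1 n, g j)
        + (∑ i ∈ Finset.Icc 1 m, g i) * (∑ j ∈ Finset.Icc 1 n, f j)) := by
    have expand : (∑ i ∈ Finset.Icc 1 m, f i) * (∑ j ∈ Finset.Icc 1 n, g j)
        + (∑ i ∈ Finset.Icc 1 m, g i) * (∑ j ∈ Finset.Icc 1 n, f j)
        = ∑ i ∈ Finset.Icc 1 m, ∑ j ∈ Finset.Icc 1 n, (f i * g j + g i * f j) := by
      rw [Finset.sum_mul_sum, Finset.sum_mul_sum, ← Finset.sum_add_distrib]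
      exact Finset.sum_congr rfl fun i _ => Finset.sum_add_distrib.symm
    rw [expand, Finset.mul_sum]
    refine Finset.sum_le_sum fun i hi => ?_
    rw [Finset.mul_sum]
    refine Finset.sum_le_sum fun j hj => ?_
    obtain ⟨hi1, _⟩ := Finset.mem_Icc.mp hi
    obtain ⟨hj1, _⟩ := Finset.mem_Icc.mp hj
    have := aux_pointwise i j hi1 hj1
    push_cast
    rw [mul_div_assoc]
    have h2 : Real.log ((i:ℝ)+(j:ℝ)) / ((i:ℝ)+(j:ℝ)) ≤ f i * g j + g i * f j := this
    linarith
  have step2 : (∑ i ∈ Finset.Icc 1 m, f i) * (∑ j ∈ Finset.Icc 1 n, g j)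
        + (∑ i ∈ Finset.Icc 1 m, g i) * (∑ j ∈ Finset.Icc 1 n, f j)
      ≤ Real.log (2*(m:ℝ)) * Real.sqrt m * (2 * Real.sqrt n)
        + 2 * Real.sqrt m * (Real.log (2*(n:ℝ)) * Real.sqrt n) := by
    have hlm : 0 ≤ Real.log (2*(m:ℝ)) := Real.log_nonneg (by linarith)
    have hln : 0 ≤ Real.log (2*(n:ℝ)) := Real.log_nonneg (by linarith)
    have h1 : (∑ i ∈ Finset.Icc 1 m, f i) * (∑ j ∈ Finset.Icc 1 n, g j)
        ≤ Real.log (2*(m:ℝ)) * Real.sqrt m * (2 * Real.sqrt n) :=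
      mul_le_mul hSf hSg (hgnn _) (by positivity)
    have h2 : (∑ i ∈ Finset.Icc 1 m, g i) * (∑ j ∈ Finset.Icc 1 n, f j)
        ≤ 2 * Real.sqrt m * (Real.log (2*(n:ℝ)) * Real.sqrt n) :=
      mul_le_mul hSg' hSf' (Finset.sum_nonneg (fun j hj => by
        obtain ⟨hj1, _⟩ := Finset.mem_Icc.mp hj
        have hj1' : (1:ℝ) ≤ (j:ℝ) := by exact_mod_cast hj1
        have : 0 ≤ Real.log (2*(j:ℝ)) := Real.log_nonneg (by linarith)
        positivity)) (by positivity)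
    linarith
  have hkey := aux_key (m:ℝ) (n:ℝ) hm1 hn1
  have hrhs : (m : ℝ) * Real.log (Real.exp 1 * m) + (n : ℝ) * Real.log (Real.exp 1 * n)
      = (m:ℝ) * (1 + Real.log m) + (n:ℝ) * (1 + Real.log n) := by
    rw [Real.log_mul (Real.exp_ne_zero 1) (by linarith), Real.log_exp,
      Real.log_mul (Real.exp_ne_zero 1) (by linarith), Real.log_exp]
  rw [hrhs]
  calc ∑ i ∈ Finset.Icc 1 m, ∑ j ∈ Finset.Icc 1 n,
      (1/2 : ℝ) * Real.log ((i + j : ℕ) : ℝ) / ((i + j : ℕ) : ℝ)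
      ≤ (1/2 : ℝ) * ((∑ i ∈ Finset.Icc 1 m, f i) * (∑ j ∈ Finset.Icc 1 n, g j)
        + (∑ i ∈ Finset.Icc 1 m, g i) * (∑ j ∈ Finset.Icc 1 n, f j)) := step1
    _ ≤ (1/2 : ℝ) * (Real.log (2*(m:ℝ)) * Real.sqrt m * (2 * Real.sqrt n)
        + 2 * Real.sqrt m * (Real.log (2*(n:ℝ)) * Real.sqrt n)) := by linarith
    _ ≤ (1/2 : ℝ) * (2 * ((m:ℝ) * (1 + Real.log m) + (n:ℝ) * (1 + Real.log n))) := by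
        linarith
    _ = (m:ℝ) * (1 + Real.log m) + (n:ℝ) * (1 + Real.log n) := by ring
end

section
/- Define x_s = |s| / 2^{|s|−1} for every binary string s of length at most n. Then for every pair of positive integers n₁, n₂ with n₁ + n₂ ≤ n and every pair of nonempty sets K₁ ⊆ {0,1}^{n₁}, K₂ ⊆ {0,1}^{n₂}, it holds that ∑_{s ∈ K₁K₂} x_s ≤ ∑_{s ∈ K₁} x_s + ∑_{s ∈ K₂} x_s, where K₁K₂ = {st : s ∈ K₁, t ∈ K₂}. -/
/-- All binary strings of length `n`. -/
def binStrings (n : ℕ) : Finset (List Bool) :=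
  (Finset.univ : Finset (Fin n → Bool)).image (fun f => List.ofFn f)

/-- Elementwise concatenation of two sets of strings. -/
def fcat (A B : Finset (List Bool)) : Finset (List Bool) :=
  (A ×ˢ B).image (fun p => p.1 ++ p.2)

lemma length_of_mem_binStrings {m : ℕ} {s : List Bool} (h : s ∈ binStrings m) :
    s.length = m := by
  obtain ⟨f, -, rfl⟩ := Finset.mem_image.1 h
  simp

lemma card_binStrings (m : ℕ) : (binStrings m).card = 2 ^ m := by
  rw [binStrings, Finset.card_image_of_injective _ List.ofFn_injective]
  simp

lemma card_fcat {n₁ n₂ : ℕ} {K₁ K₂ : Finset (List Bool)}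
    (hK₁ : ∀ s ∈ K₁, s.length = n₁) (hK₂ : ∀ s ∈ K₂, s.length = n₂) :
    (fcat K₁ K₂).card = K₁.card * K₂.card := by
  rw [fcat, Finset.card_image_of_injOn, Finset.card_product]
  intro p hp q hq h
  simp only [Finset.coe_product, Set.mem_prod, Finset.mem_coe] at hp hq
  have hlen : p.1.length = q.1.length := by
    rw [hK₁ _ hp.1, hK₁ _ hq.1]
  obtain ⟨h1, h2⟩ := List.append_inj h hlen
  exact Prod.ext h1 h2

theorem concat_constraint_allStrings (n n₁ n₂ : ℕ) (hn₁ : 0 < n₁) (hn₂ : 0 < n₂)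
    (hn : n₁ + n₂ ≤ n) (K₁ K₂ : Finset (List Bool)) (h₁ : K₁.Nonempty) (h₂ : K₂.Nonempty)
    (hK₁ : K₁ ⊆ binStrings n₁) (hK₂ : K₂ ⊆ binStrings n₂) :
    ∑ s ∈ fcat K₁ K₂, (s.length : ℝ) / 2 ^ (s.length - 1) ≤
      ∑ s ∈ K₁, (s.length : ℝ) / 2 ^ (s.length - 1) +
        ∑ s ∈ K₂, (s.length : ℝ) / 2 ^ (s.length - 1) := by
  obtain ⟨a, rfl⟩ : ∃ a, n₁ = a + 1 := ⟨n₁ - 1, by omega⟩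
  obtain ⟨b, rfl⟩ : ∃ b, n₂ = b + 1 := ⟨n₂ - 1, by omega⟩
  have hl₁ : ∀ s ∈ K₁, s.length = a + 1 := fun s hs => length_of_mem_binStrings (hK₁ hs)
  have hl₂ : ∀ s ∈ K₂, s.length = b + 1 := fun s hs => length_of_mem_binStrings (hK₂ hs)
  have hl₃ : ∀ s ∈ fcat K₁ K₂, s.length = a + b + 2 := by
    intro s hs
    obtain ⟨p, hp, rfl⟩ := Finset.mem_image.1 hs
    simp only [Finset.mem_product] at hp
    simp only [List.length_append, hl₁ _ hp.1, hl₂ _ hp.2]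
    omega
  have e₁ : ∑ s ∈ K₁, (s.length : ℝ) / 2 ^ (s.length - 1)
      = K₁.card * (((a : ℝ) + 1) / 2 ^ a) := by
    rw [Finset.sum_eq_card_nsmul (b := ((a : ℝ) + 1) / 2 ^ a)
      (fun s hs => by rw [hl₁ s hs]; norm_num), nsmul_eq_mul]
  have e₂ : ∑ s ∈ K₂, (s.length : ℝ) / 2 ^ (s.length - 1)
      = K₂.card * (((b : ℝ) + 1) / 2 ^ b) := by
    rw [Finset.sum_eq_card_nsmul (b := ((b : ℝ) + 1) / 2 ^ b)
      (fun s hs => by rw [hl₂ s hs]; norm_num), nsmul_eq_mul]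
  have e₃ : ∑ s ∈ fcat K₁ K₂, (s.length : ℝ) / 2 ^ (s.length - 1)
      = (K₁.card : ℝ) * K₂.card * (((a : ℝ) + b + 2) / 2 ^ (a + b + 1)) := by
    rw [Finset.sum_eq_card_nsmul (b := ((a : ℝ) + b + 2) / 2 ^ (a + b + 1))
      (fun s hs => by rw [hl₃ s hs]; norm_num), nsmul_eq_mul, card_fcat hl₁ hl₂]
    push_cast
    ring
  rw [e₁, e₂, e₃]
  have hc₁ : (1 : ℝ) ≤ K₁.card := by exact_mod_cast Finset.card_pos.2 h₁
  have hc₂ : (1 : ℝ) ≤ K₂.card := by exact_mod_cast Finset.card_pos.2 h₂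
  have hb₁ : (K₁.card : ℝ) ≤ 2 ^ (a + 1) := by
    exact_mod_cast (Finset.card_le_card hK₁).trans_eq (card_binStrings (a + 1))
  have hb₂ : (K₂.card : ℝ) ≤ 2 ^ (b + 1) := by
    exact_mod_cast (Finset.card_le_card hK₂).trans_eq (card_binStrings (b + 1))
  have hpa : (0:ℝ) < 2 ^ a := by positivity
  have hpb : (0:ℝ) < 2 ^ b := by positivity
  set x : ℝ := (K₁.card : ℝ) with hx
  set y : ℝ := (K₂.card : ℝ) with hy
  have hxy : x * y * ((a : ℝ) + b + 2)
      ≤ x * ((a : ℝ) + 1) * (2 * 2 ^ b) + y * ((b : ℝ) + 1) * (2 * 2 ^ a) := by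
    have h1 : x * y * ((a : ℝ) + 1) ≤ x * ((a : ℝ) + 1) * (2 * 2 ^ b) := by
      have hyb : y ≤ 2 * 2 ^ b := by
        calc y ≤ 2 ^ (b + 1) := hb₂
        _ = 2 * 2 ^ b := by ring
      calc x * y * ((a : ℝ) + 1) = x * ((a : ℝ) + 1) * y := by ring
        _ ≤ x * ((a : ℝ) + 1) * (2 * 2 ^ b) :=
          mul_le_mul_of_nonneg_left hyb (by positivity)
    have h2 : x * y * ((b : ℝ) + 1) ≤ y * ((b : ℝ) + 1) * (2 * 2 ^ a) := by
      have hxa : x ≤ 2 * 2 ^ a := by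
        calc x ≤ 2 ^ (a + 1) := hb₁
        _ = 2 * 2 ^ a := by ring
      calc x * y * ((b : ℝ) + 1) = y * ((b : ℝ) + 1) * x := by ring
        _ ≤ y * ((b : ℝ) + 1) * (2 * 2 ^ a) :=
          mul_le_mul_of_nonneg_left hxa (by positivity)
    linarith [h1, h2]
  have hgoal : x * y * ((a : ℝ) + b + 2) / (2 ^ a * 2 ^ b * 2)
      ≤ x * ((a : ℝ) + 1) / 2 ^ a + y * ((b : ℝ) + 1) / 2 ^ b := by
    rw [div_le_iff₀ (by positivity)]
    have expand : (x * ((a:ℝ) + 1) / 2 ^ a + y * ((b:ℝ) + 1) / 2 ^ b) * (2 ^ a * 2 ^ b * 2)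
        = x * ((a:ℝ) + 1) * (2 * 2 ^ b) + y * ((b:ℝ) + 1) * (2 * 2 ^ a) := by
      field_simp
    rw [expand]
    linarith [hxy]
  calc x * y * (((a : ℝ) + b + 2) / 2 ^ (a + b + 1))
      = x * y * ((a : ℝ) + b + 2) / (2 ^ a * 2 ^ b * 2) := by
        rw [pow_succ, pow_add]
        ring
    _ ≤ x * ((a : ℝ) + 1) / 2 ^ a + y * ((b : ℝ) + 1) / 2 ^ b := hgoal
    _ = x * (((a : ℝ) + 1) / 2 ^ a) + y * (((b : ℝ) + 1) / 2 ^ b) := by ring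
end

section
/- Let B(n,k) = {s ∈ {0,1}^n : s has exactly k ones}. Define x on strings with at most one 1 by x_s = |s| if s has no ones, and x_s = ln(e·|s|) if s has exactly one 1. Then for all positive integers n₁, n₂ with n₁+n₂ ≤ n, all k₁, k₂ ∈ {0,1} with k₁+k₂ ≤ 1, and all nonempty K₁ ⊆ B(n₁,k₁), K₂ ⊆ B(n₂,k₂), it holds that ∑_{s ∈ K₁K₂} x_s ≤ ∑_{s ∈ K₁} x_s + ∑_{s ∈ K₂} x_s. -/
/-- The binomial language `B(n,k)`: binary strings of length `n` with exactly `k` ones. -/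
def binom (n k : ℕ) : Finset (List Bool) :=
  (binStrings n).filter (fun s => s.count true = k)

/-- The value `x_s`: `|s|` if `s` has no ones, and `ln(e·|s|)` if `s` has exactly one 1. -/
noncomputable def xval (s : List Bool) : ℝ :=
  if s.count true = 0 then (s.length : ℝ) else Real.log (Real.exp 1 * s.length)

lemma mem_binStrings {n : ℕ} {s : List Bool} : s ∈ binStrings n ↔ s.length = n := by
  constructor
  · intro h
    simp only [binStrings, Finset.mem_image] at h
    obtain ⟨f, -, rfl⟩ := h
    simp
  · intro h
    subst h
    simp only [binStrings, Finset.mem_image]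
    exact ⟨s.get, Finset.mem_univ _, List.ofFn_get s⟩

lemma mem_binom {n k : ℕ} {s : List Bool} :
    s ∈ binom n k ↔ s.length = n ∧ s.count true = k := by
  simp [binom, mem_binStrings]

lemma count_zero_eq_replicate {s : List Bool} (h : s.count true = 0) :
    s = List.replicate s.length false := by
  rw [List.eq_replicate_iff]
  refine ⟨rfl, fun b hb => ?_⟩
  cases b
  · rfl
  · exact absurd hb (List.count_eq_zero.mp h)

lemma one_eq : ∀ (s : List Bool), s.count true = 1 →
    s = List.replicate (s.idxOf true) false ++
      true :: List.replicate (s.length - s.idxOf true - 1) false := by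
  intro s
  induction s with
  | nil => intro h; simp at h
  | cons a t ih =>
    intro h
    cases a
    · have hidx : (false :: t).idxOf true = t.idxOf true + 1 := by
        simp [List.idxOf_cons]
      have hc : t.count true = 1 := by simpa using h
      rw [hidx]
      have := ih hc
      simp only [List.replicate_succ, List.cons_append, List.length_cons]
      rw [show t.length + 1 - (t.idxOf true + 1) - 1 = t.length - t.idxOf true - 1 by omega]
      exact congrArg (false :: ·) this
    · have hc : t.count true = 0 := by simpa using h
      have hidx : (true :: t).idxOf true = 0 := by simp [List.idxOf_cons]
      rw [hidx]
      simp only [List.replicate_zero, List.nil_append, List.length_cons]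
      rw [show t.length + 1 - 0 - 1 = t.length by omega]
      exact congrArg (true :: ·) (count_zero_eq_replicate hc)

lemma binom_zero (n : ℕ) : binom n 0 = {List.replicate n false} := by
  ext s
  simp only [mem_binom, Finset.mem_singleton]
  constructor
  · rintro ⟨hl, hc⟩
    rw [count_zero_eq_replicate hc, hl]
  · rintro rfl
    simp [List.count_replicate]

lemma binom_one_card (n : ℕ) : (binom n 1).card ≤ n := by
  have h := Finset.card_le_card_of_injOn (s := binom n 1) (t := Finset.range n)
    (fun s => s.idxOf true) ?_ ?_
  · simpa using h
  · intro s hs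
    obtain ⟨hl, hc⟩ := mem_binom.mp hs
    rw [Finset.mem_coe, Finset.mem_range, ← hl]
    exact List.idxOf_lt_length_iff.mpr (List.count_pos_iff.mp (by omega))
  · intro s hs t ht hst
    obtain ⟨hls, hcs⟩ := mem_binom.mp hs
    obtain ⟨hlt, hct⟩ := mem_binom.mp ht
    rw [one_eq s hcs, one_eq t hct]
    simp only at hst
    rw [hst, hls, hlt]

lemma key_ineq (c m₁ m₂ : ℕ) (h1 : 0 < m₁) (hc : c ≤ m₁) :
    (c : ℝ) * Real.log (Real.exp 1 * ((m₁ : ℝ) + m₂)) ≤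
      (c : ℝ) * Real.log (Real.exp 1 * (m₁ : ℝ)) + (m₂ : ℝ) := by
  have hm1 : (0:ℝ) < m₁ := by exact_mod_cast h1
  have hm2 : (0:ℝ) ≤ m₂ := Nat.cast_nonneg _
  have hAB : Real.log (Real.exp 1 * ((m₁ : ℝ) + m₂)) - Real.log (Real.exp 1 * m₁)
      = Real.log (((m₁:ℝ) + m₂) / m₁) := by
    rw [Real.log_mul (Real.exp_ne_zero 1) (by positivity),
        Real.log_mul (Real.exp_ne_zero 1) (by positivity),
        Real.log_div (by positivity) (by positivity)]
    ring
  have hlog : Real.log (((m₁:ℝ) + m₂) / m₁) ≤ (m₂ : ℝ) / m₁ := by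
    have h := Real.log_le_sub_one_of_pos (x := ((m₁:ℝ) + m₂) / m₁) (by positivity)
    have heq : ((m₁:ℝ) + m₂) / m₁ - 1 = (m₂ : ℝ) / m₁ := by field_simp; ring
    linarith
  have hnn : 0 ≤ Real.log (((m₁:ℝ) + m₂) / m₁) :=
    Real.log_nonneg (by rw [le_div_iff₀ hm1]; linarith)
  have hcr : (c : ℝ) ≤ (m₁ : ℝ) := by exact_mod_cast hc
  have hstep : (c : ℝ) * Real.log (((m₁:ℝ) + m₂) / m₁) ≤ (m₁ : ℝ) * ((m₂ : ℝ) / m₁) :=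
    mul_le_mul hcr hlog hnn (le_of_lt hm1)
  have hfin : (m₁ : ℝ) * ((m₂ : ℝ) / m₁) = (m₂ : ℝ) := by field_simp
  nlinarith [hstep]

theorem concat_constraint_binom (n n₁ n₂ k₁ k₂ : ℕ) (hn₁ : 0 < n₁) (hn₂ : 0 < n₂)
    (hn : n₁ + n₂ ≤ n) (hk₁ : k₁ ≤ 1) (hk₂ : k₂ ≤ 1) (hk : k₁ + k₂ ≤ 1)
    (K₁ K₂ : Finset (List Bool)) (h₁ : K₁.Nonempty) (h₂ : K₂.Nonempty)
    (hK₁ : K₁ ⊆ binom n₁ k₁) (hK₂ : K₂ ⊆ binom n₂ k₂) :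
    ∑ s ∈ fcat K₁ K₂, xval s ≤ ∑ s ∈ K₁, xval s + ∑ s ∈ K₂, xval s := by
  have hinj : ∀ p ∈ K₁ ×ˢ K₂, ∀ q ∈ K₁ ×ˢ K₂,
      p.1 ++ p.2 = q.1 ++ q.2 → p = q := by
    intro p hp q hq hpq
    rw [Finset.mem_product] at hp hq
    have hl : p.1.length = q.1.length := by
      rw [(mem_binom.mp (hK₁ hp.1)).1, (mem_binom.mp (hK₁ hq.1)).1]
    obtain ⟨e1, e2⟩ := List.append_inj hpq hl
    exact Prod.ext e1 e2
  rw [fcat, Finset.sum_image hinj, Finset.sum_product]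
  interval_cases k₁ <;> interval_cases k₂
  · -- k₁ = 0, k₂ = 0
    have e₁ : K₁ = {List.replicate n₁ false} := by
      rw [binom_zero] at hK₁
      rcases Finset.subset_singleton_iff.mp hK₁ with h | h
      · exact absurd h (Finset.nonempty_iff_ne_empty.mp h₁)
      · exact h
    have e₂ : K₂ = {List.replicate n₂ false} := by
      rw [binom_zero] at hK₂
      rcases Finset.subset_singleton_iff.mp hK₂ with h | h
      · exact absurd h (Finset.nonempty_iff_ne_empty.mp h₂)
      · exact h
    subst e₁ e₂
    simp [xval, List.count_replicate]
  · -- k₁ = 0, k₂ = 1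
    have e₁ : K₁ = {List.replicate n₁ false} := by
      rw [binom_zero] at hK₁
      rcases Finset.subset_singleton_iff.mp hK₁ with h | h
      · exact absurd h (Finset.nonempty_iff_ne_empty.mp h₁)
      · exact h
    subst e₁
    simp only [Finset.sum_singleton]
    have hx1 : xval (List.replicate n₁ false) = (n₁ : ℝ) := by
      simp [xval, List.count_replicate]
    have hxb : ∀ b ∈ K₂, xval b = Real.log (Real.exp 1 * (n₂ : ℝ)) := by
      intro b hb
      obtain ⟨hl, hc⟩ := mem_binom.mp (hK₂ hb)
      simp [xval, hc, hl]
    have hxab : ∀ b ∈ K₂, xval (List.replicate n₁ false ++ b)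
        = Real.log (Real.exp 1 * ((n₂ : ℝ) + (n₁ : ℝ))) := by
      intro b hb
      obtain ⟨hl, hc⟩ := mem_binom.mp (hK₂ hb)
      have hcc : (List.replicate n₁ false ++ b).count true = 1 := by
        simp [List.count_append, hc, List.count_replicate]
      have hll : (List.replicate n₁ false ++ b).length = n₂ + n₁ := by
        simp [hl]; omega
      simp only [xval, hcc, hll]
      rw [if_neg (by omega)]
      push_cast
      ring_nf
    rw [Finset.sum_congr rfl hxab, Finset.sum_congr rfl hxb, hx1,
      Finset.sum_const, Finset.sum_const, nsmul_eq_mul, nsmul_eq_mul]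
    have hc : K₂.card ≤ n₂ := le_trans (Finset.card_le_card hK₂) (binom_one_card n₂)
    have := key_ineq K₂.card n₂ n₁ hn₂ hc
    linarith
  · -- k₁ = 1, k₂ = 0
    have e₂ : K₂ = {List.replicate n₂ false} := by
      rw [binom_zero] at hK₂
      rcases Finset.subset_singleton_iff.mp hK₂ with h | h
      · exact absurd h (Finset.nonempty_iff_ne_empty.mp h₂)
      · exact h
    subst e₂
    simp only [Finset.sum_singleton]
    have hx2 : xval (List.replicate n₂ false) = (n₂ : ℝ) := by
      simp [xval, List.count_replicate]
    have hxa : ∀ a ∈ K₁, xval a = Real.log (Real.exp 1 * (n₁ : ℝ)) := by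
      intro a ha
      obtain ⟨hl, hc⟩ := mem_binom.mp (hK₁ ha)
      simp [xval, hc, hl]
    have hxab : ∀ a ∈ K₁, xval (a ++ List.replicate n₂ false)
        = Real.log (Real.exp 1 * ((n₁ : ℝ) + (n₂ : ℝ))) := by
      intro a ha
      obtain ⟨hl, hc⟩ := mem_binom.mp (hK₁ ha)
      have hcc : (a ++ List.replicate n₂ false).count true = 1 := by
        simp [List.count_append, hc, List.count_replicate]
      have hll : (a ++ List.replicate n₂ false).length = n₁ + n₂ := by
        simp [hl]
      simp only [xval, hcc, hll]
      rw [if_neg (by omega)]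
      push_cast
      ring_nf
    rw [Finset.sum_congr rfl hxab, Finset.sum_congr rfl hxa, hx2,
      Finset.sum_const, Finset.sum_const, nsmul_eq_mul, nsmul_eq_mul]
    have hc : K₁.card ≤ n₁ := le_trans (Finset.card_le_card hK₁) (binom_one_card n₁)
    have := key_ineq K₁.card n₁ n₂ hn₁ hc
    linarith
  · omega
end

section
/- Define g on binary strings by: g(0^n) = n, g(s) = ln(e·n) if s has length n and exactly one 1, and for strings s with k = (number of ones) ≥ 2, g(s) = α_{k−1}·(ln p)^{k−1}/p^{k−1} where p is the maximum number of symbol positions spanned between any pair of 1s in s (inclusive gap measure as in the paper) and α₁, α₂, … are fixed positive constants. Then for every fixed k ≥ 2 there exist constants c₁, c₂ > 0 (depending on k and the α's) such that c₁·n·(ln n)^k ≤ ∑_{s ∈ B(n,k)} g(s) ≤ c₂·n·(ln n)^k for all n ≥ k+1. -/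
/-- The span `p` of the ones in `s`: the number of symbol positions from the first 1 to
the last 1, inclusive (the maximum number of symbols spanned between any pair of 1s). -/
noncomputable def onesSpan (s : List Bool) : ℕ :=
  sSup {i | i < s.length ∧ s.getD i false = true} -
    sInf {i | i < s.length ∧ s.getD i false = true} + 1

/-- The map `g`: `g(0^n) = n`, `g(s) = ln(e·n)` for `s ∈ B(n,1)`, and
`g(s) = α_{k-1}·(ln p)^{k-1}/p^{k-1}` when `s` has `k ≥ 2` ones, with `p` the ones-span. -/
noncomputable def gmap (α : ℕ → ℝ) (s : List Bool) : ℝ :=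
  if s.count true = 0 then (s.length : ℝ)
  else if s.count true = 1 then Real.log (Real.exp 1 * s.length)
  else α (s.count true - 1) * (Real.log (onesSpan s)) ^ (s.count true - 1) /
        ((onesSpan s : ℝ)) ^ (s.count true - 1)


namespace GT


def E (n : ℕ) (T : Finset ℕ) : List Bool := List.ofFn (fun i : Fin n => decide (i.1 ∈ T))

noncomputable def D (n : ℕ) (s : List Bool) : Finset ℕ :=
  (Finset.range n).filter (fun i => s.getD i false = true)

lemma length_E (n : ℕ) (T : Finset ℕ) : (E n T).length = n := by simp [E]

lemma getD_E (n : ℕ) (T : Finset ℕ) (i : ℕ) (h : i < n) :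
    (E n T).getD i false = decide (i ∈ T) := by
  rw [E, List.getD_eq_getElem?_getD, List.getElem?_ofFn]
  simp [h, List.ofFnNthVal]

lemma count_E (n : ℕ) (T : Finset ℕ) :
    (E n T).count true = ((Finset.range n).filter (fun i => i ∈ T)).card := by
  rw [E]
  induction n with
  | zero => simp
  | succ m ih =>
      rw [Finset.range_add_one, Finset.filter_insert, List.ofFn_succ', List.concat_eq_append,
        List.count_append]
      simp only [Fin.val_last, Function.comp, Fin.coe_castSucc]
      rw [ih]
      by_cases hm : m ∈ T
      · rw [if_pos hm, Finset.card_insert_of_notMem (by simp)]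
        simp [hm]
      · rw [if_neg hm]
        simp [hm]

lemma count_E_of_subset (n : ℕ) (T : Finset ℕ) (hT : T ⊆ Finset.range n) :
    (E n T).count true = T.card := by
  rw [count_E]
  congr 1
  ext x
  simp only [Finset.mem_filter, Finset.mem_range]
  exact ⟨fun h => h.2, fun h => ⟨Finset.mem_range.1 (hT h), h⟩⟩

lemma E_mem_binom (n k : ℕ) (T : Finset ℕ) (hT : T ∈ Finset.powersetCard k (Finset.range n)) :
    E n T ∈ binom n k := by
  rw [Finset.mem_powersetCard] at hT
  rw [binom, Finset.mem_filter]
  refine ⟨?_, by rw [count_E_of_subset n T hT.1, hT.2]⟩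
  rw [binStrings, Finset.mem_image]
  exact ⟨_, Finset.mem_univ _, rfl⟩

lemma D_E (n : ℕ) (T : Finset ℕ) (hT : T ⊆ Finset.range n) : D n (E n T) = T := by
  ext x
  simp only [D, Finset.mem_filter, Finset.mem_range]
  constructor
  · rintro ⟨hx, hg⟩
    rw [getD_E n T x hx] at hg; simpa using hg
  · intro hx
    have hxn : x < n := Finset.mem_range.1 (hT hx)
    exact ⟨hxn, by rw [getD_E n T x hxn]; simpa⟩

lemma mem_binStrings (n : ℕ) (s : List Bool) (hs : s ∈ binStrings n) :
    s.length = n ∧ ∃ f : Fin n → Bool, s = List.ofFn f := by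
  rw [binStrings, Finset.mem_image] at hs
  obtain ⟨f, _, rfl⟩ := hs
  exact ⟨List.length_ofFn, f, rfl⟩

lemma E_D (n : ℕ) (s : List Bool) (hs : s ∈ binStrings n) : E n (D n s) = s := by
  obtain ⟨hlen, f, rfl⟩ := mem_binStrings n s hs
  apply List.ext_getElem (by simp [E])
  intro i h1 h2
  have hin : i < n := by simpa using h2
  have : (E n (D n (List.ofFn f)))[i] = (E n (D n (List.ofFn f))).getD i false := by
    rw [List.getD_eq_getElem?_getD, List.getElem?_eq_getElem h1]; rfl
  rw [this, getD_E _ _ _ hin]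
  have : (List.ofFn f)[i] = (List.ofFn f).getD i false := by
    rw [List.getD_eq_getElem?_getD, List.getElem?_eq_getElem h2]; rfl
  rw [this]
  simp only [D, Finset.mem_filter, Finset.mem_range]
  rw [List.getD_eq_getElem?_getD, List.getElem?_ofFn]
  simp [hin, List.ofFnNthVal]

lemma D_mem_powersetCard (n k : ℕ) (s : List Bool) (hs : s ∈ binom n k) :
    D n s ∈ Finset.powersetCard k (Finset.range n) := by
  rw [binom, Finset.mem_filter] at hs
  rw [Finset.mem_powersetCard]
  refine ⟨Finset.filter_subset _ _, ?_⟩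
  have := count_E_of_subset n (D n s) (Finset.filter_subset _ _)
  rw [E_D n s hs.1] at this
  rw [← this, hs.2]

lemma sum_binom_eq (n k : ℕ) (F : List Bool → ℝ) :
    ∑ s ∈ binom n k, F s = ∑ T ∈ Finset.powersetCard k (Finset.range n), F (E n T) := by
  refine Finset.sum_nbij' (i := D n) (j := E n)
    (fun s hs => D_mem_powersetCard n k s hs)
    (fun T hT => E_mem_binom n k T hT)
    (fun s hs => E_D n s (Finset.mem_filter.1 hs).1)
    (fun T hT => D_E n T (Finset.mem_powersetCard.1 hT).1)
    (fun s hs => by rw [E_D n s (Finset.mem_filter.1 hs).1])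



noncomputable def na (T : Finset ℕ) : ℕ := sInf (↑T : Set ℕ)
noncomputable def nb (T : Finset ℕ) : ℕ := sSup (↑T : Set ℕ)
noncomputable def w (T : Finset ℕ) : ℕ := nb T - na T
noncomputable def mid (T : Finset ℕ) : Finset ℕ :=
  ((T.erase (na T)).erase (nb T)).image (fun x => x - (na T + 1))

lemma na_mem (T : Finset ℕ) (hT : T.Nonempty) : na T ∈ T := Nat.sInf_mem (by exact ⟨hT.choose, hT.choose_spec⟩)

lemma nb_mem (T : Finset ℕ) (hT : T.Nonempty) : nb T ∈ T :=
  Nat.sSup_mem ⟨hT.choose, hT.choose_spec⟩ T.bddAbove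

lemma na_le (T : Finset ℕ) {x : ℕ} (hx : x ∈ T) : na T ≤ x := Nat.sInf_le hx

lemma le_nb (T : Finset ℕ) {x : ℕ} (hx : x ∈ T) : x ≤ nb T := le_csSup T.bddAbove hx

lemma na_eq (T : Finset ℕ) (a : ℕ) (ha : a ∈ T) (h : ∀ x ∈ T, a ≤ x) : na T = a :=
  le_antisymm (Nat.sInf_le ha) (le_csInf ⟨a, ha⟩ (by rintro b hb; exact h b hb))

lemma nb_eq (T : Finset ℕ) (b : ℕ) (hb : b ∈ T) (h : ∀ x ∈ T, x ≤ b) : nb T = b :=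
  le_antisymm (csSup_le ⟨b, hb⟩ (by rintro x hx; exact h x hx)) (le_csSup T.bddAbove hb)

lemma na_lt_nb (T : Finset ℕ) (hcard : 1 < T.card) : na T < nb T := by
  have hne : T.Nonempty := Finset.card_pos.1 (by omega)
  have h := Finset.min'_lt_max'_of_card T hcard
  have h1 : na T = T.min' hne := by
    rw [na, hne.csInf_eq_min']
  have h2 : nb T = T.max' hne := by
    rw [nb, hne.csSup_eq_max']
  omega

/-- Key structural lemma for the "build" direction. -/
lemma build_props (a d : ℕ) (M : Finset ℕ) (hd : 1 ≤ d) (hM : M ⊆ Finset.range (d-1)) :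
    na (insert a (insert (a+d) (M.image (· + (a+1))))) = a ∧
    nb (insert a (insert (a+d) (M.image (· + (a+1))))) = a + d ∧
    (insert a (insert (a+d) (M.image (· + (a+1))))).card = M.card + 2 ∧
    mid (insert a (insert (a+d) (M.image (· + (a+1))))) = M := by
  set T := insert a (insert (a+d) (M.image (· + (a+1)))) with hTdef
  have hmem_img : ∀ x ∈ M.image (· + (a+1)), a + 1 ≤ x ∧ x ≤ a + d - 1 := by
    intro x hx
    obtain ⟨y, hy, rfl⟩ := Finset.mem_image.1 hx
    have := Finset.mem_range.1 (hM hy)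
    omega
  have hmemT : ∀ x ∈ T, a ≤ x ∧ x ≤ a + d := by
    intro x hx
    rcases Finset.mem_insert.1 hx with rfl | hx
    · omega
    rcases Finset.mem_insert.1 hx with rfl | hx
    · omega
    · have := hmem_img x hx; omega
  have haT : a ∈ T := Finset.mem_insert_self _ _
  have hbT : a + d ∈ T := Finset.mem_insert_of_mem (Finset.mem_insert_self _ _)
  have hna : na T = a := na_eq T a haT (fun x hx => (hmemT x hx).1)
  have hnb : nb T = a + d := nb_eq T (a+d) hbT (fun x hx => (hmemT x hx).2)
  have hanotin : a ∉ insert (a+d) (M.image (· + (a+1))) := by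
    intro h
    rcases Finset.mem_insert.1 h with h | h
    · omega
    · have := hmem_img a h; omega
  have hbnotin : a + d ∉ M.image (· + (a+1)) := by
    intro h
    have := hmem_img _ h; omega
  have hcard : T.card = M.card + 2 := by
    rw [hTdef, Finset.card_insert_of_notMem hanotin, Finset.card_insert_of_notMem hbnotin,
      Finset.card_image_of_injective _ (add_left_injective _)]
  have herase : (T.erase (na T)).erase (nb T) = M.image (· + (a+1)) := by
    rw [hna, hnb, hTdef, Finset.erase_insert hanotin, Finset.erase_insert hbnotin]
  refine ⟨hna, hnb, hcard, ?_⟩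
  rw [mid, herase, hna, Finset.image_image]
  have : ∀ x ∈ M, (x + (a+1)) - (a+1) = x := fun x _ => by omega
  calc M.image (fun x => (x + (a+1)) - (a+1)) = M.image id := Finset.image_congr (fun x hx => by simp only [id]; omega)
    _ = M := Finset.image_id

/-- Key structural lemma for the "decompose" direction. -/
lemma decomp_props (m : ℕ) (T : Finset ℕ) (hcard : T.card = m + 2) :
    1 ≤ w T ∧ (mid T).card = m ∧ mid T ⊆ Finset.range (w T - 1) ∧
    T = insert (na T) (insert (na T + w T) ((mid T).image (· + (na T + 1)))) := by
  have hne : T.Nonempty := Finset.card_pos.1 (by omega)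
  have hab : na T < nb T := na_lt_nb T (by omega)
  have hw : nb T = na T + w T := by rw [w]; omega
  have hd : 1 ≤ w T := by rw [w]; omega
  have hbe : nb T ∈ T.erase (na T) := Finset.mem_erase.2 ⟨by omega, nb_mem T hne⟩
  have hmide : ∀ x ∈ (T.erase (na T)).erase (nb T), na T < x ∧ x < nb T := by
    intro x hx
    have h1 := Finset.mem_erase.1 hx
    have h2 := Finset.mem_erase.1 h1.2
    have h3 := na_le T h2.2
    have h4 := le_nb T h2.2
    exact ⟨by omega, by omega⟩
  have hcard_mid : (mid T).card = m := by
    rw [mid, Finset.card_image_of_injOn ?_, Finset.card_erase_of_mem hbe,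
      Finset.card_erase_of_mem (na_mem T hne), hcard]
    · omega
    · intro x hx y hy hxy
      have := hmide x hx
      have := hmide y hy
      simp only at hxy
      omega
  have hsub : mid T ⊆ Finset.range (w T - 1) := by
    intro z hz
    obtain ⟨x, hx, rfl⟩ := Finset.mem_image.1 hz
    have := hmide x hx
    rw [Finset.mem_range]
    omega
  refine ⟨hd, hcard_mid, hsub, ?_⟩
  have himg : (mid T).image (· + (na T + 1)) = (T.erase (na T)).erase (nb T) := by
    rw [mid, Finset.image_image]
    calc ((T.erase (na T)).erase (nb T)).image (fun x => (x - (na T + 1)) + (na T + 1))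
        = ((T.erase (na T)).erase (nb T)).image id := Finset.image_congr (fun x hx => by
            have := hmide x hx; simp only [id]; omega)
      _ = _ := Finset.image_id
  rw [himg, ← hw, Finset.insert_erase hbe, Finset.insert_erase (na_mem T hne)]





noncomputable def Fib (n k d : ℕ) : Finset (Finset ℕ) :=
  (Finset.powersetCard k (Finset.range n)).filter (fun T => w T = d)

lemma mem_fib {n k d : ℕ} {T : Finset ℕ} (hT : T ∈ Fib n k d) :
    T ⊆ Finset.range n ∧ T.card = k ∧ w T = d := by
  have h := Finset.mem_filter.1 hT
  have h2 := Finset.mem_powersetCard.1 h.1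
  exact ⟨h2.1, h2.2, h.2⟩

lemma fib_card_upper (n m d : ℕ) :
    (Fib n (m+2) d).card ≤ n * Nat.choose (d-1) m := by
  have key := Finset.card_le_card_of_injOn (f := fun T => (na T, mid T))
    (s := Fib n (m+2) d)
    (t := (Finset.range n) ×ˢ Finset.powersetCard m (Finset.range (d-1))) ?_ ?_
  · simpa [Finset.card_powersetCard] using key
  · intro T hT
    obtain ⟨hsub, hcard, hw⟩ := mem_fib hT
    obtain ⟨hd1, hmc, hms, _⟩ := decomp_props m T hcard
    rw [Finset.mem_coe, Finset.mem_product, Finset.mem_powersetCard]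
    refine ⟨?_, by rwa [hw] at hms, hmc⟩
    have : na T ∈ T := na_mem T (Finset.card_pos.1 (by omega))
    exact hsub this
  · intro T1 h1 T2 h2 heq
    simp only [Finset.mem_coe] at h1 h2
    obtain ⟨_, hc1, hw1⟩ := mem_fib h1
    obtain ⟨_, hc2, hw2⟩ := mem_fib h2
    obtain ⟨_, _, _, hre1⟩ := decomp_props m T1 hc1
    obtain ⟨_, _, _, hre2⟩ := decomp_props m T2 hc2
    have hna : na T1 = na T2 := congrArg Prod.fst heq
    have hmid : mid T1 = mid T2 := congrArg Prod.snd heq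
    rw [hre1, hre2, hna, hmid, hw1, hw2]

lemma fib_card_lower (n m d : ℕ) (hd : 1 ≤ d) (hdn : d < n) :
    (n - d) * Nat.choose (d-1) m ≤ (Fib n (m+2) d).card := by
  have key := Finset.card_le_card_of_injOn
    (f := fun p : ℕ × Finset ℕ => insert p.1 (insert (p.1 + d) (p.2.image (· + (p.1+1)))))
    (s := (Finset.range (n-d)) ×ˢ Finset.powersetCard m (Finset.range (d-1)))
    (t := Fib n (m+2) d) ?_ ?_
  · simpa [Finset.card_powersetCard] using key
  · rintro ⟨a, M⟩ hp
    rw [Finset.mem_coe, Finset.mem_product, Finset.mem_powersetCard] at hp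
    have ha := hp.1
    have hMs := hp.2.1
    have hMc := hp.2.2
    have ha' : a < n - d := Finset.mem_range.1 ha
    obtain ⟨hna, hnb, hcard, hmid⟩ := build_props a d M hd hMs
    rw [Finset.mem_coe, Fib, Finset.mem_filter, Finset.mem_powersetCard]
    refine ⟨⟨?_, by rw [hcard, hMc]⟩, ?_⟩
    · intro x hx
      have hxb := le_nb _ hx
      rw [hnb] at hxb
      rw [Finset.mem_range]
      omega
    · simp only [w, hna, hnb]
      omega
  · rintro ⟨a1, M1⟩ h1 ⟨a2, M2⟩ h2 heq
    simp only [Finset.mem_coe, Finset.mem_product, Finset.mem_powersetCard] at h1 h2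
    obtain ⟨hna1, _, _, hmid1⟩ := build_props a1 d M1 hd h1.2.1
    obtain ⟨hna2, _, _, hmid2⟩ := build_props a2 d M2 hd h2.2.1
    simp only at heq
    have hA : a1 = a2 := by rw [← hna1, ← hna2, heq]
    have hM : M1 = M2 := by rw [← hmid1, ← hmid2, heq]
    exact Prod.ext hA hM




lemma log_diff (x : ℝ) (hx : 0 < x) : 1/(x+1) ≤ Real.log (x+1) - Real.log x := by
  have hx1 : (0:ℝ) < x + 1 := by linarith
  have h := Real.log_le_sub_one_of_pos (x := x/(x+1)) (by positivity)
  rw [Real.log_div (ne_of_gt hx) (ne_of_gt hx1)] at h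
  have he : x/(x+1) - 1 = -(1/(x+1)) := by field_simp; ring
  rw [he] at h
  linarith

lemma log_diff' (x : ℝ) (hx : 0 < x) : Real.log (x+1) - Real.log x ≤ 1/x := by
  have hx1 : (0:ℝ) < x + 1 := by linarith
  have h := Real.log_le_sub_one_of_pos (x := (x+1)/x) (by positivity)
  rw [Real.log_div (ne_of_gt hx1) (ne_of_gt hx)] at h
  have he : (x+1)/x - 1 = 1/x := by field_simp; ring
  rw [he] at h
  linarith

lemma harmonic_upper (n : ℕ) : ∑ d ∈ Finset.range n, (1:ℝ)/(d+1) ≤ 1 + Real.log n := by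
  induction n with
  | zero => simp
  | succ p ih =>
      rw [Finset.sum_range_succ]
      rcases Nat.eq_zero_or_pos p with rfl | hp
      · simp
      · have h := log_diff (p:ℝ) (by exact_mod_cast hp)
        push_cast
        push_cast at ih
        linarith

lemma harmonic_lower (A B : ℕ) (h : A ≤ B) :
    Real.log (B+2) - Real.log (A+1) ≤ ∑ d ∈ Finset.Icc A B, (1:ℝ)/(d+1) := by
  induction B with
  | zero =>
      have hA : A = 0 := by omega
      subst hA
      simp only [Finset.Icc_self, Finset.sum_singleton]
      have := log_diff' (1:ℝ) one_pos
      norm_num at this ⊢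
      linarith [Real.log_one]
  | succ p ih =>
      rw [Finset.sum_Icc_succ_top h]
      have hd := log_diff' ((p:ℝ)+2) (by positivity)
      rcases Nat.lt_or_ge p A with hpa | hpa
      · have hAp : A = p + 1 := by omega
        subst hAp
        have he : Finset.Icc (p+1) p = ∅ := by
          rw [Finset.Icc_eq_empty_iff]; omega
        rw [he, Finset.sum_empty]
        push_cast
        have e1 : (p:ℝ)+1+2 = (p:ℝ)+2+1 := by ring
        have e2 : (p:ℝ)+1+1 = (p:ℝ)+2 := by ring
        rw [e1, e2]
        linarith
      · have hih := ih hpa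
        push_cast
        have e1 : (p:ℝ)+1+2 = (p:ℝ)+2+1 := by ring
        have e2 : (p:ℝ)+1+1 = (p:ℝ)+2 := by ring
        rw [e1, e2]
        linarith

lemma one_le_log (n : ℕ) (hn : 3 ≤ n) : 1 ≤ Real.log n := by
  rw [Real.le_log_iff_exp_le (by positivity : (0:ℝ) < (n:ℝ))]
  have h9 := Real.exp_one_lt_d9
  have : (3:ℝ) ≤ n := by exact_mod_cast hn
  linarith


end GT

namespace GT

noncomputable def hfun (α : ℕ → ℝ) (m : ℕ) (d : ℕ) : ℝ :=
  α (m+1) * (Real.log ((d:ℝ)+1)) ^ (m+1) / ((d:ℝ)+1) ^ (m+1)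

lemma span_E (n : ℕ) (T : Finset ℕ) (hT : T ⊆ Finset.range n) (hne : T.Nonempty) :
    onesSpan (E n T) = w T + 1 := by
  have hset : {i | i < (E n T).length ∧ (E n T).getD i false = true} = (↑T : Set ℕ) := by
    ext i
    simp only [Set.mem_setOf_eq, length_E, Finset.mem_coe]
    constructor
    · rintro ⟨h1, h2⟩
      rw [getD_E n T i h1] at h2
      simpa using h2
    · intro hi
      have h1 := Finset.mem_range.1 (hT hi)
      exact ⟨h1, by rw [getD_E n T i h1]; simpa⟩
  rw [onesSpan, hset]
  rfl

lemma gmap_E (α : ℕ → ℝ) (n m : ℕ) (T : Finset ℕ)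
    (hT : T ∈ Finset.powersetCard (m+2) (Finset.range n)) :
    gmap α (E n T) = hfun α m (w T) := by
  rw [Finset.mem_powersetCard] at hT
  have hcount : (E n T).count true = m + 2 := by rw [count_E_of_subset n T hT.1, hT.2]
  have hne : T.Nonempty := Finset.card_pos.1 (by rw [hT.2]; omega)
  simp only [gmap, hcount]
  rw [if_neg (by omega), if_neg (by omega), span_E n T hT.1 hne]
  have h1 : m + 2 - 1 = m + 1 := rfl
  rw [h1, hfun]
  push_cast
  ring

lemma S_eq_powerset (α : ℕ → ℝ) (n m : ℕ) :
    ∑ s ∈ binom n (m+2), gmap α s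
      = ∑ T ∈ Finset.powersetCard (m+2) (Finset.range n), hfun α m (w T) := by
  rw [sum_binom_eq]
  exact Finset.sum_congr rfl (fun T hT => gmap_E α n m T hT)

lemma S_eq_fiber (α : ℕ → ℝ) (n m : ℕ) :
    ∑ T ∈ Finset.powersetCard (m+2) (Finset.range n), hfun α m (w T)
      = ∑ d ∈ Finset.range n, ((Fib n (m+2) d).card : ℝ) * hfun α m d := by
  rw [← Finset.sum_fiberwise_of_maps_to (g := w) (t := Finset.range n) ?_
      (fun T => hfun α m (w T))]
  · apply Finset.sum_congr rfl
    intro d _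
    rw [show Finset.filter (fun T => w T = d) (Finset.powersetCard (m+2) (Finset.range n))
        = Fib n (m+2) d from rfl]
    rw [Finset.sum_congr rfl (fun T hT => by rw [(Finset.mem_filter.1 hT).2]),
      Finset.sum_const, nsmul_eq_mul]
  · intro T hT
    rw [Finset.mem_powersetCard] at hT
    have hne : T.Nonempty := Finset.card_pos.1 (by omega)
    have hb : nb T ∈ Finset.range n := hT.1 (nb_mem T hne)
    rw [Finset.mem_range] at hb ⊢
    have hw : w T ≤ nb T := Nat.sub_le _ _
    omega

lemma hfun_nonneg (α : ℕ → ℝ) (hα : ∀ i, 0 < α i) (m d : ℕ) : 0 ≤ hfun α m d := by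
  rw [hfun]
  apply div_nonneg _ (by positivity)
  apply mul_nonneg (hα (m+1)).le
  apply pow_nonneg
  apply Real.log_nonneg
  have := Nat.cast_nonneg (α := ℝ) d
  linarith

lemma hfun_pos (α : ℕ → ℝ) (hα : ∀ i, 0 < α i) (m d : ℕ) (hd : 1 ≤ d) : 0 < hfun α m d := by
  rw [hfun]
  apply div_pos _ (by positivity)
  apply mul_pos (hα (m+1))
  apply pow_pos
  apply Real.log_pos
  have : (1:ℝ) ≤ (d:ℝ) := by exact_mod_cast hd
  linarith

lemma S_pos (α : ℕ → ℝ) (hα : ∀ i, 0 < α i) (m n : ℕ) (hn : m + 2 ≤ n) :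
    0 < ∑ s ∈ binom n (m+2), gmap α s := by
  rw [S_eq_powerset]
  apply Finset.sum_pos
  · intro T hT
    have hmem := Finset.mem_powersetCard.1 hT
    have hlt := na_lt_nb T (by rw [hmem.2]; omega)
    exact hfun_pos α hα m (w T) (by rw [w]; omega)
  · refine ⟨Finset.range (m+2), Finset.mem_powersetCard.2 ⟨?_, Finset.card_range _⟩⟩
    exact Finset.range_subset_range.2 hn

lemma main_upper (α : ℕ → ℝ) (hα : ∀ i, 0 < α i) (m n : ℕ) (hn : m + 3 ≤ n) :
    ∑ s ∈ binom n (m+2), gmap α s ≤ (2 * α (m+1)) * ((n:ℝ) * Real.log n ^ (m+2)) := by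
  set L := Real.log n with hLdef
  have hL1 : 1 ≤ L := one_le_log n (by omega)
  have hL0 : 0 ≤ L := by linarith
  have hβ := hα (m+1)
  have hn0 : 0 < (n:ℝ) := by exact_mod_cast (by omega : 0 < n)
  have hfact : 0 ≤ α (m+1) * (n:ℝ) * L^(m+1) :=
    mul_nonneg (mul_nonneg hβ.le hn0.le) (pow_nonneg hL0 _)
  rw [S_eq_powerset, S_eq_fiber α n m]
  have hterm : ∀ d ∈ Finset.range n,
      ((Fib n (m+2) d).card : ℝ) * hfun α m d ≤ (α (m+1) * n * L^(m+1)) * (1/((d:ℝ)+1)) := by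
    intro d hd
    have hdn : d < n := Finset.mem_range.1 hd
    rcases Nat.eq_zero_or_pos d with rfl | hd1
    · have h0 : hfun α m 0 = 0 := by rw [hfun]; norm_num
      rw [h0, mul_zero]
      apply mul_nonneg hfact (by norm_num)
    · have hx : (0:ℝ) < (d:ℝ)+1 := by positivity
      have hcard_nat : (Fib n (m+2) d).card ≤ n * (d+1)^m := by
        calc (Fib n (m+2) d).card ≤ n * Nat.choose (d-1) m := fib_card_upper n m d
          _ ≤ n * (d+1)^m := by
              apply Nat.mul_le_mul_left
              calc Nat.choose (d-1) m ≤ (d-1)^m := Nat.choose_le_pow _ _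
                _ ≤ (d+1)^m := Nat.pow_le_pow_left (by omega) m
      have hcard : ((Fib n (m+2) d).card : ℝ) ≤ (n:ℝ) * ((d:ℝ)+1)^m := by
        have := (Nat.cast_le (α := ℝ)).2 hcard_nat
        push_cast at this
        exact this
      have hlog : Real.log ((d:ℝ)+1) ≤ L := by
        apply Real.log_le_log hx
        exact_mod_cast hdn
      have hlognn : 0 ≤ Real.log ((d:ℝ)+1) := Real.log_nonneg (by linarith)
      have hhf : hfun α m d ≤ α (m+1) * L^(m+1) / ((d:ℝ)+1)^(m+1) := by
        rw [hfun]
        exact (div_le_div_iff_of_pos_right (by positivity)).2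
          (mul_le_mul_of_nonneg_left (pow_le_pow_left₀ hlognn hlog _) hβ.le)
      calc ((Fib n (m+2) d).card : ℝ) * hfun α m d
          ≤ ((n:ℝ)*((d:ℝ)+1)^m) * (α (m+1) * L^(m+1) / ((d:ℝ)+1)^(m+1)) :=
            mul_le_mul hcard hhf (hfun_nonneg α hα m d) (by positivity)
        _ = (α (m+1) * n * L^(m+1)) * (1/((d:ℝ)+1)) := by
            rw [pow_succ]
            field_simp
            ring
  calc ∑ d ∈ Finset.range n, ((Fib n (m+2) d).card : ℝ) * hfun α m d
      ≤ ∑ d ∈ Finset.range n, (α (m+1) * n * L^(m+1)) * (1/((d:ℝ)+1)) :=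
        Finset.sum_le_sum hterm
    _ = (α (m+1) * n * L^(m+1)) * ∑ d ∈ Finset.range n, 1/((d:ℝ)+1) := by
        rw [Finset.mul_sum]
    _ ≤ (α (m+1) * n * L^(m+1)) * (1 + L) :=
        mul_le_mul_of_nonneg_left (harmonic_upper n) hfact
    _ ≤ (α (m+1) * n * L^(m+1)) * (2*L) :=
        mul_le_mul_of_nonneg_left (by linarith) hfact
    _ = (2 * α (m+1)) * ((n:ℝ) * L^(m+2)) := by ring

lemma main_lower (α : ℕ → ℝ) (hα : ∀ i, 0 < α i) (m n : ℕ)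
    (hn : 4*(m+2)*(m+2) + 65536 ≤ n) :
    (α (m+1) / (2^(2*m+2) * (m.factorial : ℝ)) / 4) * ((n:ℝ) * Real.log n ^ (m+2))
      ≤ ∑ s ∈ binom n (m+2), gmap α s := by
  set A := Nat.sqrt n with hAdef
  set B := n / 2 with hBdef
  set L := Real.log n with hLdef
  have hβ := hα (m+1)
  set K : ℝ := α (m+1) / (2^(2*m+2) * (m.factorial : ℝ)) with hKdef
  have hK : 0 < K := by
    apply div_pos hβ
    positivity
  have hn2 : 65536 ≤ n := by omega
  have hA256 : 256 ≤ A := by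
    have h := Nat.sqrt_le_sqrt (show 256*256 ≤ n by omega)
    rwa [Nat.sqrt_eq] at h
  have hA2k : 2*(m+2) ≤ A := by
    have h : (2*(m+2))*(2*(m+2)) ≤ n := by
      have he : (2*(m+2))*(2*(m+2)) = 4*(m+2)*(m+2) := by ring
      rw [he]
      exact le_trans (Nat.le_add_right _ 65536) hn
    have h2 := Nat.sqrt_le_sqrt h
    rwa [Nat.sqrt_eq] at h2
  have hAA : A * A ≤ n := by
    have := Nat.sqrt_le' n
    rwa [pow_two] at this
  have hAB : A ≤ B := by
    rw [hBdef, Nat.le_div_iff_mul_le (by norm_num)]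
    calc A * 2 ≤ A * A := Nat.mul_le_mul_left A (by omega)
      _ ≤ n := hAA
  have hBn : B < n := Nat.div_lt_self (by omega) (by omega)
  have hnAA : n < (A+1)*(A+1) := by
    have := Nat.lt_succ_sqrt n
    simpa [Nat.succ_eq_add_one] using this
  have h2B : n ≤ 2*B + 1 := by omega
  have hn0 : 0 < (n:ℝ) := by exact_mod_cast (by omega : 0 < n)
  have hlog2 : 0 < Real.log 2 := Real.log_pos (by norm_num)
  have hL8 : 8 * Real.log 2 ≤ L := by
    have h1 : ((2:ℝ))^8 ≤ (n:ℝ) := by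
      norm_num
      exact_mod_cast (by omega : 256 ≤ n)
    have := Real.log_le_log (by norm_num) h1
    rwa [Real.log_pow] at this
    
  have hL0 : 0 < L := by linarith
  -- harmonic interval bound
  have hdiff : L/4 ≤ Real.log ((B:ℝ)+2) - Real.log ((A:ℝ)+1) := by
    have hB2 : (n:ℝ) ≤ 2*((B:ℝ)+2) := by
      have : (n:ℝ) ≤ 2*(B:ℝ) + 1 := by exact_mod_cast h2B
      linarith
    have h1 : L - Real.log 2 ≤ Real.log ((B:ℝ)+2) := by
      have hl := Real.log_le_log hn0 hB2
      rw [Real.log_mul (by norm_num) (by positivity)] at hl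
      linarith
    have hA1r : (1:ℝ) ≤ (A:ℝ) := by
      have : (256:ℝ) ≤ (A:ℝ) := by exact_mod_cast hA256
      linarith
    have hA0 : (0:ℝ) < (A:ℝ) := by linarith
    have h2 : Real.log ((A:ℝ)+1) ≤ Real.log 2 + L/2 := by
      have hAAr : (A:ℝ)*(A:ℝ) ≤ (n:ℝ) := by exact_mod_cast hAA
      have hA1 : Real.log ((A:ℝ)*(A:ℝ)) ≤ L := Real.log_le_log (by positivity) hAAr
      rw [Real.log_mul (ne_of_gt hA0) (ne_of_gt hA0)] at hA1
      have hAlog : Real.log (A:ℝ) ≤ L/2 := by linarith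
      have hstep : Real.log ((A:ℝ)+1) ≤ Real.log (2*(A:ℝ)) := by
        apply Real.log_le_log (by linarith)
        linarith [hA1r]
      rw [Real.log_mul (by norm_num) (ne_of_gt hA0)] at hstep
      linarith
    linarith
  -- termwise lower bound on the fibers
  have hterm : ∀ d ∈ Finset.Icc A B,
      (K * n * L^(m+1)) * (1/((d:ℝ)+1)) ≤ ((Fib n (m+2) d).card : ℝ) * hfun α m d := by
    intro d hd
    rw [Finset.mem_Icc] at hd
    obtain ⟨hdA, hdB⟩ := hd
    have hd1 : 1 ≤ d := by omega
    have hdn : d < n := by omega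
    have hx : (0:ℝ) < (d:ℝ)+1 := by positivity
    -- cardinality lower bound
    have hcard_nat := fib_card_lower n m d hd1 hdn
    have hnd2 : n ≤ 2*(n - d) := by omega
    have hc1 : (n:ℝ)/2 ≤ ((n - d : ℕ):ℝ) := by
      have : (n:ℝ) ≤ 2*((n-d:ℕ):ℝ) := by exact_mod_cast hnd2
      linarith
    have hc2 : (((d:ℝ)+1)/2)^m / (m.factorial:ℝ) ≤ ((d-1).choose m : ℝ) := by
      have hkey := Nat.pow_le_choose (α := ℝ) m (d-1)
      have he : d - 1 + 1 - m = d - m := by omega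
      rw [he] at hkey
      have hdm : ((d:ℝ)+1)/2 ≤ ((d - m : ℕ):ℝ) := by
        have h2dm : d + 1 ≤ 2*(d - m) := by omega
        have : (d:ℝ) + 1 ≤ 2*((d-m:ℕ):ℝ) := by exact_mod_cast h2dm
        linarith
      have hfm : (0:ℝ) < (m.factorial:ℝ) := by exact_mod_cast m.factorial_pos
      calc (((d:ℝ)+1)/2)^m / (m.factorial:ℝ)
          ≤ (((d - m:ℕ):ℝ))^m / (m.factorial:ℝ) :=
            (div_le_div_iff_of_pos_right hfm).2 (pow_le_pow_left₀ (by positivity) hdm _)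
        _ ≤ ((d-1).choose m : ℝ) := by
            push_cast at hkey
            exact hkey
    have hcard : ((n:ℝ)/2) * ((((d:ℝ)+1)/2)^m / (m.factorial:ℝ))
        ≤ ((Fib n (m+2) d).card : ℝ) := by
      have hcast : (((n-d) * Nat.choose (d-1) m : ℕ):ℝ) ≤ ((Fib n (m+2) d).card : ℝ) := by
        exact_mod_cast hcard_nat
      push_cast at hcast
      calc ((n:ℝ)/2) * ((((d:ℝ)+1)/2)^m / (m.factorial:ℝ))
          ≤ ((n-d:ℕ):ℝ) * ((d-1).choose m : ℝ) := by
            apply mul_le_mul hc1 hc2 (by positivity) (by positivity)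
        _ ≤ _ := by push_cast; exact hcast
    -- hfun lower bound
    have hlogd : L/2 ≤ Real.log ((d:ℝ)+1) := by
      have hnd : n ≤ (d+1)*(d+1) :=
        le_of_lt (lt_of_lt_of_le hnAA (Nat.mul_le_mul (by omega) (by omega)))
      have hr : (n:ℝ) ≤ ((d:ℝ)+1)*((d:ℝ)+1) := by exact_mod_cast hnd
      have := Real.log_le_log hn0 hr
      rw [Real.log_mul (ne_of_gt hx) (ne_of_gt hx)] at this
      linarith
    have hhf : α (m+1) * (L/2)^(m+1) / ((d:ℝ)+1)^(m+1) ≤ hfun α m d := by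
      rw [hfun]
      exact (div_le_div_iff_of_pos_right (by positivity)).2
        (mul_le_mul_of_nonneg_left (pow_le_pow_left₀ (by linarith) hlogd _) hβ.le)
    calc (K * n * L^(m+1)) * (1/((d:ℝ)+1))
        = (((n:ℝ)/2) * ((((d:ℝ)+1)/2)^m / (m.factorial:ℝ)))
            * (α (m+1) * (L/2)^(m+1) / ((d:ℝ)+1)^(m+1)) := by
          rw [hKdef, pow_succ, div_pow, div_pow]
          have hfm : (0:ℝ) < (m.factorial:ℝ) := by exact_mod_cast m.factorial_pos
          field_simp
          ring
      _ ≤ ((Fib n (m+2) d).card : ℝ) * hfun α m d := by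
          apply mul_le_mul hcard hhf (by positivity) (by positivity)
  -- assemble
  rw [S_eq_powerset, S_eq_fiber α n m]
  have hsubset : Finset.Icc A B ⊆ Finset.range n := by
    intro d hd
    rw [Finset.mem_Icc] at hd
    rw [Finset.mem_range]
    omega
  have hfactK : 0 ≤ K * (n:ℝ) * L^(m+1) :=
    mul_nonneg (mul_nonneg hK.le hn0.le) (pow_nonneg hL0.le _)
  calc (K/4) * ((n:ℝ) * L^(m+2))
      = (K * n * L^(m+1)) * (L/4) := by ring
    _ ≤ (K * n * L^(m+1)) * (Real.log ((B:ℝ)+2) - Real.log ((A:ℝ)+1)) :=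
        mul_le_mul_of_nonneg_left hdiff hfactK
    _ ≤ (K * n * L^(m+1)) * ∑ d ∈ Finset.Icc A B, 1/((d:ℝ)+1) :=
        mul_le_mul_of_nonneg_left (harmonic_lower A B hAB) hfactK
    _ = ∑ d ∈ Finset.Icc A B, (K * n * L^(m+1)) * (1/((d:ℝ)+1)) := by
        rw [Finset.mul_sum]
    _ ≤ ∑ d ∈ Finset.Icc A B, ((Fib n (m+2) d).card : ℝ) * hfun α m d :=
        Finset.sum_le_sum hterm
    _ ≤ ∑ d ∈ Finset.range n, ((Fib n (m+2) d).card : ℝ) * hfun α m d := by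
        apply Finset.sum_le_sum_of_subset_of_nonneg hsubset
        intro d _ _
        exact mul_nonneg (by positivity) (hfun_nonneg α hα m d)

end GT

theorem gmap_objective_theta (k : ℕ) (hk : 2 ≤ k) (α : ℕ → ℝ) (hα : ∀ i, 0 < α i) :
    ∃ c₁ c₂ : ℝ, 0 < c₁ ∧ 0 < c₂ ∧ ∀ n : ℕ, k + 1 ≤ n →
      c₁ * (n * (Real.log n) ^ k) ≤ ∑ s ∈ binom n k, gmap α s ∧
      ∑ s ∈ binom n k, gmap α s ≤ c₂ * (n * (Real.log n) ^ k) := by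
  obtain ⟨m, rfl⟩ : ∃ m, k = m + 2 := ⟨k - 2, by omega⟩
  set N₀ : ℕ := 4*(m+2)*(m+2) + 65536 with hN₀def
  set cmain : ℝ := α (m+1) / (2^(2*m+2) * (m.factorial : ℝ)) / 4 with hcmaindef
  have hβ := hα (m+1)
  have hcmain : 0 < cmain := by
    rw [hcmaindef]
    apply div_pos (div_pos hβ (by positivity)) (by norm_num)
  set ratio : ℕ → ℝ := fun n => (∑ s ∈ binom n (m+2), gmap α s) / ((n:ℝ) * Real.log n ^ (m+2))
    with hratiodef
  have hmN : m + 3 ≤ N₀ := by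
    rw [hN₀def]
    have h1 : m + 3 ≤ 4*(m+2) := by omega
    have h2 : 4*(m+2) ≤ 4*(m+2)*(m+2) := Nat.le_mul_of_pos_right _ (by omega)
    exact le_trans h1 (le_trans h2 (Nat.le_add_right _ _))
  have hNe : (Finset.Icc (m+3) N₀).Nonempty := ⟨m+3, Finset.mem_Icc.2 ⟨le_rfl, hmN⟩⟩
  set G := (Finset.Icc (m+3) N₀).image ratio with hGdef
  have hGne : G.Nonempty := hNe.image _
  have hden : ∀ n : ℕ, m + 3 ≤ n → 0 < (n:ℝ) * Real.log n ^ (m+2) := by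
    intro n hn
    have hL1 : 1 ≤ Real.log n := GT.one_le_log n (by omega)
    have : (0:ℝ) < n := by exact_mod_cast (by omega : 0 < n)
    exact mul_pos this (pow_pos (by linarith) _)
  have hratio_pos : ∀ n ∈ Finset.Icc (m+3) N₀, 0 < ratio n := by
    intro n hn
    rw [Finset.mem_Icc] at hn
    exact div_pos (GT.S_pos α hα m n (by omega)) (hden n hn.1)
  set c₁ : ℝ := min cmain (G.min' hGne) with hc₁def
  have hc₁pos : 0 < c₁ := by
    apply lt_min hcmain
    have hmem := G.min'_mem hGne
    obtain ⟨n₀, hn₀, heq⟩ := Finset.mem_image.1 hmem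
    exact lt_of_lt_of_eq (hratio_pos n₀ hn₀) heq
  refine ⟨c₁, 2 * α (m+1), hc₁pos, by linarith, ?_⟩
  intro n hn
  constructor
  · rcases le_or_gt n N₀ with hsmall | hbig
    · have hmem : ratio n ∈ G := by
        rw [hGdef]
        exact Finset.mem_image_of_mem _ (Finset.mem_Icc.2 ⟨by omega, hsmall⟩)
      have h1 : c₁ ≤ ratio n := le_trans (min_le_right _ _) (G.min'_le _ hmem)
      have hd := hden n (by omega)
      calc c₁ * ((n:ℝ) * Real.log n ^ (m+2))
          ≤ ratio n * ((n:ℝ) * Real.log n ^ (m+2)) :=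
            mul_le_mul_of_nonneg_right h1 hd.le
        _ = ∑ s ∈ binom n (m+2), gmap α s := div_mul_cancel₀ _ (ne_of_gt hd)
    · have hmain := GT.main_lower α hα m n hbig.le
      calc c₁ * ((n:ℝ) * Real.log n ^ (m+2))
          ≤ cmain * ((n:ℝ) * Real.log n ^ (m+2)) :=
            mul_le_mul_of_nonneg_right (min_le_left _ _) (hden n (by omega)).le
        _ ≤ ∑ s ∈ binom n (m+2), gmap α s := hmain
  · exact GT.main_upper α hα m n (by omega)
end
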